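/- Let σ be a nondecreasing sigmoidal function satisfying (Σ1)–(Σ5) with parameters m ≥ 2 and β > m + 1. Then for every s ∈ {1, …, m}, the algebraic moment 𝒜_s(φ_σ^{(s)}, x) := ∑_{k∈ℤ} φ_σ^{(s)}(x−k)(k−x)^s equals s! for every x ∈ ℝ. -/

import Mathlib

open Filter Topology MeasureTheory

/-- The density (kernel) function generated by a sigmoidal function. -/
noncomputable def phiFn (σ : ℝ → ℝ) (x : ℝ) : ℝ := (σ (x + 1) - σ (x - 1)) / 2

/-- σ is a (measurable) sigmoidal function. -/
def Sigmoidal (σ : ℝ → ℝ) : Prop :=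
  Measurable σ ∧ Tendsto σ atBot (𝓝 0) ∧ Tendsto σ atTop (𝓝 1)

/-- (Σ1): σ(x) - 1/2 is an odd function. -/
def Sigma1 (σ : ℝ → ℝ) : Prop := ∀ x : ℝ, σ (-x) - 1/2 = -(σ x - 1/2)

/-- (Σ2): σ ∈ C²(ℝ) and σ is concave on [0, +∞). -/
def Sigma2 (σ : ℝ → ℝ) : Prop := ContDiff ℝ 2 σ ∧ ConcaveOn ℝ (Set.Ici 0) σ

/-- (Σ3): σ(x) = O(|x|^{-α-1}) as x → -∞, with α > 0. -/
def Sigma3 (σ : ℝ → ℝ) (α : ℝ) : Prop :=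
  0 < α ∧ σ =O[atBot] fun x : ℝ => |x| ^ (-α - 1)

/-- (Σ4): σ ∈ C^m(ℝ), m ≥ 2, and for each s = 1,…,m there are constants
`K s, C s > 0` with |σ^{(s)}(x)| ≤ C s * |x|^{-β-1} for |x| ≥ K s, where β > m + 1. -/
def Sigma4 (σ : ℝ → ℝ) (m : ℕ) (β : ℝ) (K C : ℕ → ℝ) : Prop :=
  2 ≤ m ∧ (m : ℝ) + 1 < β ∧ ContDiff ℝ m σ ∧
    ∀ s : ℕ, 1 ≤ s → s ≤ m → 0 < K s ∧ 0 < C s ∧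
      ∀ x : ℝ, K s ≤ |x| → |iteratedDeriv s σ x| ≤ C s * |x| ^ (-β - 1)

/-- Algebraic moment of order ν of Φ. -/
noncomputable def algMoment (Φ : ℝ → ℝ) (ν : ℕ) (x : ℝ) : ℝ :=
  ∑' k : ℤ, Φ (x - (k : ℝ)) * ((k : ℝ) - x) ^ ν

/-- (Σ5): the algebraic moments of order j = 1,…,m of φ_σ are constants A j. -/
def Sigma5 (σ : ℝ → ℝ) (m : ℕ) (A : ℕ → ℝ) : Prop :=
  ∀ j : ℕ, 1 ≤ j → j ≤ m → ∀ x : ℝ, algMoment (phiFn σ) j x = A j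

/-- Truncated algebraic moment of order ν of Φ (associated with integers a < b). -/
noncomputable def truncMoment (Φ : ℝ → ℝ) (ν : ℕ) (a b : ℤ) (n : ℕ) (u : ℝ) : ℝ :=
  ∑ k ∈ Finset.Icc ((n : ℤ) * a) ((n : ℤ) * b), Φ (u - (k : ℝ)) * ((k : ℝ) - u) ^ ν

/-- The ν-th discrete absolute moment function of Φ (before taking sup over u). -/
noncomputable def discMoment (Φ : ℝ → ℝ) (ν : ℝ) (u : ℝ) : ℝ :=
  ∑' k : ℤ, |Φ (u - (k : ℝ))| * |u - (k : ℝ)| ^ ν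

/-- The Riemann zeta function (as a real series), ζ(p) = ∑_{i≥1} i^{-p}. -/
noncomputable def zetaR (p : ℝ) : ℝ := ∑' i : ℕ, ((i : ℝ) + 1) ^ (-p)

/-- The NN operator F_n activated by σ. -/
noncomputable def Fop (σ : ℝ → ℝ) (f : ℝ → ℝ) (a b : ℝ) (n : ℕ) (x : ℝ) : ℝ :=
  (∑ k ∈ Finset.Icc ⌈(n : ℝ) * a⌉ ⌊(n : ℝ) * b⌋, f ((k : ℝ) / n) * phiFn σ ((n : ℝ) * x - k)) /
    (∑ k ∈ Finset.Icc ⌈(n : ℝ) * a⌉ ⌊(n : ℝ) * b⌋, phiFn σ ((n : ℝ) * x - k))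

/-- The modified NN operator F̃_n (integer endpoints a < b). -/
noncomputable def Ftil (σ : ℝ → ℝ) (f : ℝ → ℝ) (a b : ℤ) (n : ℕ) (x : ℝ) : ℝ :=
  ∑ k ∈ Finset.Icc ((n : ℤ) * a) ((n : ℤ) * b), f ((k : ℝ) / n) * phiFn σ ((n : ℝ) * x - (k : ℝ))

/-- Sup-norm of g on [a,b]. -/
noncomputable def supNormOn (g : ℝ → ℝ) (a b : ℝ) : ℝ := ⨆ x : Set.Icc a b, |g x|

/-- Modulus of continuity of g on [a,b]. -/
noncomputable def modulus (g : ℝ → ℝ) (a b h : ℝ) : ℝ :=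
  sSup {y : ℝ | ∃ u ∈ Set.Icc a b, ∃ v ∈ Set.Icc a b, |u - v| ≤ h ∧ y = |g u - g v|}

/-- Discrete absolute moment (natural order ν) of Φ: sup over u of the moment series. -/
noncomputable def dmomentN (Φ : ℝ → ℝ) (ν : ℕ) : ℝ :=
  ⨆ u : ℝ, ∑' k : ℤ, |Φ (u - (k : ℝ))| * |u - (k : ℝ)| ^ ν


/-!
Write `M r j y = ∑ₖ φ_σ^{(r)}(y - k) (k - y)^j`. Under (Σ4) every `φ_σ^{(r)}`, `r ≤ m`, decays like
`(1 + |t|)^{-β-1}`, so the series defining `M r j` may be differentiated term by term, which gives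
`∂_y M r j = M (r+1) j - j M r (j-1)`. Hence `M (r+1) j = j M r (j-1)` as soon as `M r j` is
constant; starting from (Σ5) (`r = 0 < j`), induction on `r` shows that `M r j` is constant for
all `r < j ≤ m`. On the diagonal this gives `M (r+1) (r+1) = (r+1) M r r`, and `M 0 0 = 1` since
`∑ₖ φ_σ(y - k)` telescopes to `lim_{+∞} σ - lim_{-∞} σ`. So `M s s = s!`.
-/

open Asymptotics

lemma rpow_neg_le_mul_rpow_neg {a u v b : ℝ} (hb : 0 ≤ b) (ha : 0 < a) (hu : 0 ≤ u)
    (hv : 0 < v) (h : v ≤ a * u) : u ^ (-b) ≤ a ^ b * v ^ (-b) :=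
  calc u ^ (-b) = a ^ b * (a * u) ^ (-b) := by
        rw [Real.mul_rpow ha.le hu, ← mul_assoc, ← Real.rpow_add ha, add_neg_cancel,
          Real.rpow_zero, one_mul]
    _ ≤ a ^ b * v ^ (-b) :=
        mul_le_mul_of_nonneg_left (Real.rpow_le_rpow_of_nonpos hv h (by linarith)) (by positivity)

noncomputable def decayWeight (b t : ℝ) : ℝ := (1 + |t|) ^ (-b)

section DecayWeight

variable {b : ℝ}

lemma decayWeight_pos (b t : ℝ) : 0 < decayWeight b t := by
  unfold decayWeight; positivity

lemma norm_decayWeight (b t : ℝ) : ‖decayWeight b t‖ = decayWeight b t :=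
  Real.norm_of_nonneg (decayWeight_pos b t).le

/-- Peetre's inequality. -/
lemma decayWeight_le_mul (hb : 0 ≤ b) (u v : ℝ) :
    decayWeight b u ≤ (1 + |u - v|) ^ b * decayWeight b v := by
  refine rpow_neg_le_mul_rpow_neg hb (by positivity) (by positivity) (by positivity) ?_
  have : |v| ≤ |u| + |u - v| := by simpa using abs_sub u (u - v)
  nlinarith [abs_nonneg u, abs_nonneg (u - v)]

lemma decayWeight_le_of_abs_sub_le_one (hb : 0 ≤ b) {u v : ℝ} (h : |u - v| ≤ 1) :
    decayWeight b u ≤ 2 ^ b * decayWeight b v :=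
  (decayWeight_le_mul hb u v).trans <| by
    gcongr
    · exact (decayWeight_pos b v).le
    · linarith

lemma summable_decayWeight_sub_int (hb : 1 < b) (x : ℝ) :
    Summable fun k : ℤ => decayWeight b (x - k) := by
  refine summable_of_isBigO (Real.summable_abs_int_rpow hb) <|
    IsBigO.of_bound ((1 + |x|) ^ b) ?_
  filter_upwards [eventually_cofinite_ne 0] with k hk
  have hk : (0 : ℝ) < |(k : ℝ)| := by positivity
  rw [norm_decayWeight, Real.norm_of_nonneg (by positivity)]
  calc decayWeight b (x - k) ≤ (1 + |x|) ^ b * decayWeight b (-k) := by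
        simpa using decayWeight_le_mul (by linarith) (x - k) (-k)
    _ ≤ (1 + |x|) ^ b * |(k : ℝ)| ^ (-b) := by
        gcongr
        rw [decayWeight, abs_neg]
        exact Real.rpow_le_rpow_of_nonpos hk (by linarith) (by linarith)

end DecayWeight

section Periodization

variable {h h' : ℝ → ℝ} {p : ℝ}

lemma summable_comp_sub_int (hp : 1 < p) (hh : h =O[⊤] decayWeight p) (x : ℝ) :
    Summable fun k : ℤ => h (x - k) :=
  summable_of_isBigO (summable_decayWeight_sub_int hp x)
    ((hh.comp_tendsto (tendsto_top (f := fun k : ℤ => x - k))).mono le_top)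

theorem hasDerivAt_tsum_comp_sub_int (hp : 1 < p) (hd : ∀ t, HasDerivAt h (h' t) t)
    (hh : h =O[⊤] decayWeight p) (hh' : h' =O[⊤] decayWeight p) (x : ℝ) :
    HasDerivAt (fun y => ∑' k : ℤ, h (y - k)) (∑' k : ℤ, h' (x - k)) x := by
  obtain ⟨C, hC0, hC⟩ := hh'.exists_nonneg
  rw [isBigOWith_top] at hC
  refine hasDerivAt_tsum_of_isPreconnected (g := fun (k : ℤ) y => h (y - k))
    (g' := fun (k : ℤ) y => h' (y - k))
    ((summable_decayWeight_sub_int hp x).mul_left (C * 2 ^ p)) Metric.isOpen_ball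
    (convex_ball x 1).isPreconnected (fun k y _ => ?_) (fun k y hy => ?_)
    (Metric.mem_ball_self one_pos) (summable_comp_sub_int hp hh x) (Metric.mem_ball_self one_pos)
  · exact (hd (y - k)).comp_sub_const y k
  · have hyx : |(y - k) - (x - k)| ≤ 1 := by
      rw [sub_sub_sub_cancel_right, ← Real.dist_eq]
      exact (Metric.mem_ball.1 hy).le
    calc ‖h' (y - k)‖ ≤ C * decayWeight p (y - k) := by
          simpa only [norm_decayWeight] using hC (y - k)
      _ ≤ C * (2 ^ p * decayWeight p (x - k)) := by
          gcongr
          exact decayWeight_le_of_abs_sub_le_one (by linarith) hyx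
      _ = C * 2 ^ p * decayWeight p (x - k) := by ring

end Periodization

section Moments

variable {g g' : ℝ → ℝ} {b : ℝ}

lemma algMoment_eq_tsum (g : ℝ → ℝ) (j : ℕ) (y : ℝ) :
    algMoment g j y = ∑' k : ℤ, g (y - k) * (-(y - k)) ^ j := by
  simp only [algMoment, neg_sub]

lemma isBigO_mul_neg_pow {c : ℝ} {i : ℕ} (hg : g =O[⊤] decayWeight b) (hi : (i : ℝ) ≤ c) :
    (fun t => g t * (-t) ^ i) =O[⊤] decayWeight (b - c) := by
  have hpow : (fun t : ℝ => (-t) ^ i) =O[⊤] fun t => (1 + |t|) ^ c := by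
    refine isBigO_top.2 ⟨1, fun t => ?_⟩
    rw [one_mul, norm_pow, norm_neg, Real.norm_eq_abs, Real.norm_of_nonneg (by positivity),
      ← Real.rpow_natCast]
    calc |t| ^ (i : ℝ) ≤ (1 + |t|) ^ (i : ℝ) := by gcongr; linarith
      _ ≤ (1 + |t|) ^ c := Real.rpow_le_rpow_of_exponent_le (by linarith [abs_nonneg t]) hi
  refine (hg.mul hpow).congr_right fun t => ?_
  rw [decayWeight, decayWeight, ← Real.rpow_add (by positivity)]
  ring_nf

theorem hasDerivAt_algMoment {j : ℕ} (hj : (j : ℝ) + 1 < b) (hd : ∀ t, HasDerivAt g (g' t) t)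
    (hg : g =O[⊤] decayWeight b) (hg' : g' =O[⊤] decayWeight b) (x : ℝ) :
    HasDerivAt (algMoment g j) (algMoment g' j x - j * algMoment g (j - 1) x) x := by
  have hp : 1 < b - j := by linarith
  have hmul : ∀ t, HasDerivAt (fun t => g t * (-t) ^ j)
      (g' t * (-t) ^ j - j * (g t * (-t) ^ (j - 1))) t := fun t =>
    ((hd t).fun_mul ((hasDerivAt_neg t).fun_pow j)).congr_deriv (by ring)
  have h₀ := isBigO_mul_neg_pow (i := j) hg le_rfl
  have h₁ := isBigO_mul_neg_pow (i := j) hg' le_rfl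
  have h₂ := isBigO_mul_neg_pow (i := j - 1) hg (c := j) (by exact_mod_cast Nat.sub_le j 1)
  convert hasDerivAt_tsum_comp_sub_int hp hmul h₀ (h₁.sub (h₂.const_mul_left j)) x using 1
  · exact funext (algMoment_eq_tsum g j)
  · rw [Summable.tsum_sub (summable_comp_sub_int hp h₁ x)
      ((summable_comp_sub_int hp h₂ x).mul_left _), tsum_mul_left,
      algMoment_eq_tsum, algMoment_eq_tsum]

lemma algMoment_eq_mul_of_forall_eq {j : ℕ} {c : ℝ} (hj : (j : ℝ) + 1 < b)
    (hd : ∀ t, HasDerivAt g (g' t) t) (hg : g =O[⊤] decayWeight b)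
    (hg' : g' =O[⊤] decayWeight b) (hc : ∀ y, algMoment g j y = c) (x : ℝ) :
    algMoment g' j x = j * algMoment g (j - 1) x := by
  have h := (hasDerivAt_algMoment hj hd hg hg' x).unique
    ((funext hc : algMoment g j = fun _ => c) ▸ hasDerivAt_const x c)
  linarith

end Moments

section Sigmoid

variable {σ : ℝ → ℝ} {b : ℝ}

lemma isBigO_decayWeight_of_bound {g : ℝ → ℝ} {K C : ℝ} (hg : Continuous g) (hb : 0 ≤ b)
    (hK : 0 < K) (h : ∀ y, K ≤ |y| → |g y| ≤ C * |y| ^ (-b)) : g =O[⊤] decayWeight b := by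
  obtain ⟨M, hM⟩ := (isCompact_Icc (a := -K) (b := K)).exists_bound_of_continuousOn
    hg.continuousOn
  have hC : 0 ≤ C := by
    have := (abs_nonneg _).trans (h K (by rw [abs_of_pos hK]))
    exact nonneg_of_mul_nonneg_left this (by positivity)
  refine isBigO_top.2 ⟨max (M * (1 + K) ^ b) (C * (1 + K⁻¹) ^ b), fun y => ?_⟩
  rw [norm_decayWeight, Real.norm_eq_abs]
  rcases le_total K |y| with hy | hy
  · have hy' : 1 + |y| ≤ (1 + K⁻¹) * |y| := by
      have : 1 ≤ K⁻¹ * |y| := by rwa [inv_mul_eq_div, one_le_div hK]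
      linarith
    calc |g y| ≤ C * |y| ^ (-b) := h y hy
      _ ≤ C * ((1 + K⁻¹) ^ b * decayWeight b y) := by
          gcongr
          exact rpow_neg_le_mul_rpow_neg hb (by positivity) (abs_nonneg y) (by positivity) hy'
      _ ≤ _ := by
          rw [← mul_assoc]
          gcongr
          · exact (decayWeight_pos b y).le
          · exact le_max_right _ _
  · have hM0 : 0 ≤ M := (norm_nonneg _).trans (hM 0 (by constructor <;> linarith))
    calc |g y| ≤ M := hM y (abs_le.1 hy)
      _ ≤ M * ((1 + K) ^ b * decayWeight b y) := by
          refine le_mul_of_one_le_right hM0 ?_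
          simpa [decayWeight] using rpow_neg_le_mul_rpow_neg hb (by positivity) zero_le_one
            (by positivity) (by linarith : 1 + |y| ≤ (1 + K) * 1)
      _ ≤ _ := by
          rw [← mul_assoc]
          gcongr
          · exact (decayWeight_pos b y).le
          · exact le_max_left _ _

lemma isBigO_decayWeight_comp_add_const {g : ℝ → ℝ} (hb : 0 ≤ b)
    (hg : g =O[⊤] decayWeight b) (c : ℝ) : (fun y => g (y + c)) =O[⊤] decayWeight b :=
  (hg.comp_tendsto (tendsto_top (f := fun y : ℝ => y + c))).trans <|
    isBigO_top.2 ⟨(1 + |c|) ^ b, fun y => by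
      rw [Function.comp_apply, norm_decayWeight, norm_decayWeight]
      simpa using decayWeight_le_mul hb (y + c) y⟩

lemma isBigO_phiFn (hσ : Differentiable ℝ σ) (hb : 0 ≤ b) (h : deriv σ =O[⊤] decayWeight b) :
    phiFn σ =O[⊤] decayWeight b := by
  obtain ⟨C, hC0, hC⟩ := h.exists_nonneg
  rw [isBigOWith_top] at hC
  refine isBigO_top.2 ⟨C * 2 ^ b, fun y => ?_⟩
  obtain ⟨c, hc, hslope⟩ := exists_deriv_eq_slope σ (by linarith : y - 1 < y + 1)
    hσ.continuous.continuousOn hσ.differentiableOn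
  have hφ : phiFn σ y = deriv σ c := by
    rw [phiFn, hslope]
    ring
  have hcy : |c - y| ≤ 1 := abs_sub_le_iff.2 ⟨by linarith [hc.2], by linarith [hc.1]⟩
  calc ‖phiFn σ y‖ ≤ C * decayWeight b c := by simpa only [hφ, norm_decayWeight] using hC c
    _ ≤ C * (2 ^ b * decayWeight b y) := by
        gcongr
        exact decayWeight_le_of_abs_sub_le_one hb hcy
    _ = C * 2 ^ b * ‖decayWeight b y‖ := by rw [norm_decayWeight]; ring

lemma iteratedDeriv_phiFn {r : ℕ} (hσ : ContDiff ℝ r σ) (y : ℝ) :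
    iteratedDeriv r (phiFn σ) y =
      (iteratedDeriv r σ (y + 1) - iteratedDeriv r σ (y - 1)) / 2 := by
  have h₁ : ContDiff ℝ r fun x => σ (x + 1) := hσ.comp (contDiff_id.add contDiff_const)
  have h₂ : ContDiff ℝ r fun x => σ (x - 1) := hσ.comp (contDiff_id.sub contDiff_const)
  change iteratedDeriv r (fun x => (σ (x + 1) - σ (x - 1)) / 2) y = _
  rw [iteratedDeriv_div_const, iteratedDeriv_fun_sub h₁.contDiffAt h₂.contDiffAt,
    iteratedDeriv_comp_add_const, iteratedDeriv_comp_sub_const]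

lemma contDiff_phiFn {n : WithTop ℕ∞} (hσ : ContDiff ℝ n σ) : ContDiff ℝ n (phiFn σ) :=
  ((hσ.comp (contDiff_id.add contDiff_const)).sub
    (hσ.comp (contDiff_id.sub contDiff_const))).div_const 2

theorem isBigO_iteratedDeriv_phiFn {m r : ℕ} (hσ : ContDiff ℝ m σ) (hm : 1 ≤ m) (hb : 0 ≤ b)
    (hdec : ∀ s, 1 ≤ s → s ≤ m → iteratedDeriv s σ =O[⊤] decayWeight b) (hr : r ≤ m) :
    iteratedDeriv r (phiFn σ) =O[⊤] decayWeight b := by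
  rcases Nat.eq_zero_or_pos r with rfl | hr0
  · rw [iteratedDeriv_zero]
    refine isBigO_phiFn (hσ.differentiable (by exact_mod_cast (by omega : m ≠ 0))) hb ?_
    simpa only [iteratedDeriv_one] using hdec 1 le_rfl hm
  · rw [funext (iteratedDeriv_phiFn (hσ.of_le (by exact_mod_cast hr)))]
    have h := hdec r hr0 hr
    simpa only [sub_eq_add_neg, div_eq_inv_mul] using
      ((isBigO_decayWeight_comp_add_const hb h 1).sub
        (isBigO_decayWeight_comp_add_const hb h (-1))).const_mul_left 2⁻¹

end Sigmoid

theorem Sigmoidal.hasSum_phiFn_sub_int {σ : ℝ → ℝ} (hσ : Sigmoidal σ) {x : ℝ}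
    (hs : Summable fun k : ℤ => phiFn σ (x - k)) : HasSum (fun k : ℤ => phiFn σ (x - k)) 1 := by
  obtain ⟨-, hbot, htop⟩ := hσ
  set G : ℤ → ℝ := fun k => (σ (x - k + 1) + σ (x - k)) / 2
  have hG : ∀ k : ℤ, phiFn σ (x - k) = G k - G (k + 1) := fun k => by
    simp only [phiFn, G]
    push_cast
    ring_nf
  have hpartial : ∀ N : ℕ, ∑ k ∈ Finset.Ico (-(N : ℤ)) N, phiFn σ (x - k) = G (-N) - G N :=
    fun N => by simp_rw [hG]; exact Finset.sum_Ico_int_sub N G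
  have hN := tendsto_natCast_atTop_atTop (R := ℝ)
  have hσ_add (c : ℝ) : Tendsto (fun N : ℕ => σ (c + N)) atTop (𝓝 1) :=
    htop.comp (tendsto_atTop_add_const_left _ c hN)
  have hσ_sub (c : ℝ) : Tendsto (fun N : ℕ => σ (c - N)) atTop (𝓝 0) :=
    hbot.comp (tendsto_atBot_add_const_left _ c (tendsto_neg_atBot_iff.2 hN))
  have hlim : Tendsto (fun N : ℕ => G (-N) - G N) atTop (𝓝 1) := by
    have := (((hσ_add (x + 1)).add (hσ_add x)).div_const 2).sub
      (((hσ_sub (x + 1)).add (hσ_sub x)).div_const 2)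
    convert this using 2 with N
    · simp only [G]
      push_cast
      ring_nf
    · norm_num
  have hsym : Tendsto (fun N : ℕ => Finset.Ico (-(N : ℤ)) N) atTop atTop :=
    Finset.tendsto_Ico_neg_atTop_atTop.comp tendsto_natCast_atTop_atTop
  convert hs.hasSum
  exact tendsto_nhds_unique (hlim.congr fun N => (hpartial N).symm) (hs.hasSum.comp hsym)

section Sigma

variable {σ : ℝ → ℝ} {m : ℕ} {β : ℝ} {K C A : ℕ → ℝ}

namespace Sigma4

lemma cast_add_one_lt (h4 : Sigma4 σ m β K C) {j : ℕ} (hj : j ≤ m) : (j : ℝ) + 1 < β + 1 := by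
  have : (j : ℝ) ≤ m := by exact_mod_cast hj
  linarith [h4.2.1]

lemma one_lt_add_one (h4 : Sigma4 σ m β K C) : 1 < β + 1 := by
  simpa using h4.cast_add_one_lt m.zero_le

lemma isBigO_iteratedDeriv (h4 : Sigma4 σ m β K C) {s : ℕ} (hs1 : 1 ≤ s) (hsm : s ≤ m) :
    iteratedDeriv s σ =O[⊤] decayWeight (β + 1) := by
  obtain ⟨hK, -, h⟩ := h4.2.2.2 s hs1 hsm
  refine isBigO_decayWeight_of_bound (C := C s)
    (h4.2.2.1.continuous_iteratedDeriv s (by exact_mod_cast hsm))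
    (by linarith [h4.one_lt_add_one]) hK fun y hy => ?_
  simpa only [neg_add'] using h y hy

lemma isBigO_iteratedDeriv_phiFn (h4 : Sigma4 σ m β K C) {r : ℕ} (hr : r ≤ m) :
    iteratedDeriv r (phiFn σ) =O[⊤] decayWeight (β + 1) :=
  _root_.isBigO_iteratedDeriv_phiFn h4.2.2.1 (by linarith [h4.1])
    (by linarith [h4.one_lt_add_one]) (fun _ hs1 hsm => h4.isBigO_iteratedDeriv hs1 hsm) hr

lemma algMoment_iteratedDeriv_phiFn_succ (h4 : Sigma4 σ m β K C) {r j : ℕ} (hr : r < m)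
    (hj : j ≤ m) {c : ℝ} (hc : ∀ y, algMoment (iteratedDeriv r (phiFn σ)) j y = c) (x : ℝ) :
    algMoment (iteratedDeriv (r + 1) (phiFn σ)) j x =
      j * algMoment (iteratedDeriv r (phiFn σ)) (j - 1) x := by
  have hφ := contDiff_phiFn h4.2.2.1
  have hd : ∀ t, HasDerivAt (iteratedDeriv r (phiFn σ)) (iteratedDeriv (r + 1) (phiFn σ) t) t :=
    fun t => by
      rw [iteratedDeriv_succ]
      exact (hφ.differentiable_iteratedDeriv r (by exact_mod_cast hr) t).hasDerivAt
  exact algMoment_eq_mul_of_forall_eq (h4.cast_add_one_lt hj) hd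
    (h4.isBigO_iteratedDeriv_phiFn hr.le) (h4.isBigO_iteratedDeriv_phiFn hr) hc x

theorem exists_algMoment_iteratedDeriv_phiFn_eq (h4 : Sigma4 σ m β K C) (h5 : Sigma5 σ m A) :
    ∀ r j : ℕ, r < j → j ≤ m → ∃ c, ∀ y, algMoment (iteratedDeriv r (phiFn σ)) j y = c := by
  intro r
  induction r with
  | zero => exact fun j hj hjm => ⟨A j, by simpa only [iteratedDeriv_zero] using h5 j hj hjm⟩
  | succ r ih =>
    intro j hj hjm
    obtain ⟨c, hc⟩ := ih j (by omega) hjm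
    obtain ⟨c', hc'⟩ := ih (j - 1) (by omega) (by omega)
    exact ⟨j * c', fun y => by
      rw [h4.algMoment_iteratedDeriv_phiFn_succ (by omega) hjm hc, hc']⟩

end Sigma4

theorem algMoment_iteratedDeriv_phiFn_self (hσ : Sigmoidal σ) (h4 : Sigma4 σ m β K C)
    (h5 : Sigma5 σ m A) {r : ℕ} (hr : r ≤ m) (x : ℝ) :
    algMoment (iteratedDeriv r (phiFn σ)) r x = r.factorial := by
  induction r generalizing x with
  | zero =>
    have hdec := h4.isBigO_iteratedDeriv_phiFn (Nat.zero_le m)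
    rw [iteratedDeriv_zero] at hdec
    simp only [algMoment, iteratedDeriv_zero, pow_zero, mul_one, Nat.factorial_zero,
      Nat.cast_one]
    exact (hσ.hasSum_phiFn_sub_int (summable_comp_sub_int h4.one_lt_add_one hdec x)).tsum_eq
  | succ r ih =>
    obtain ⟨c, hc⟩ := h4.exists_algMoment_iteratedDeriv_phiFn_eq h5 r (r + 1) r.lt_succ_self hr
    rw [h4.algMoment_iteratedDeriv_phiFn_succ hr hr hc, Nat.add_sub_cancel, ih (by omega),
      Nat.factorial_succ]
    push_cast
    ring

end Sigma

theorem alg_moment_deriv_top_general (σ : ℝ → ℝ) (β : ℝ) (m : ℕ) (K C : ℕ → ℝ) (A : ℕ → ℝ)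
    (hσ : Sigmoidal σ) (h4 : Sigma4 σ m β K C) (h5 : Sigma5 σ m A)
    (s : ℕ) (hsm : s ≤ m) (x : ℝ) :
    algMoment (iteratedDeriv s (phiFn σ)) s x = (s.factorial : ℝ) :=
  algMoment_iteratedDeriv_phiFn_self hσ h4 h5 hsm x

theorem alg_moment_deriv_top (σ : ℝ → ℝ) (α β : ℝ) (m : ℕ) (K C : ℕ → ℝ) (A : ℕ → ℝ)
    (hσ : Sigmoidal σ) (hmono : Monotone σ) (h1 : Sigma1 σ) (h2 : Sigma2 σ) (h3 : Sigma3 σ α)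
    (h4 : Sigma4 σ m β K C) (h5 : Sigma5 σ m A)
    (s : ℕ) (hs1 : 1 ≤ s) (hsm : s ≤ m) (x : ℝ) :
    algMoment (iteratedDeriv s (phiFn σ)) s x = (s.factorial : ℝ) :=
  alg_moment_deriv_top_general σ β m K C A hσ h4 h5 s hsm x
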